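/- Let p ≥ 1, let I₀ and I₁ be disjoint finite index sets, and let x^(i) ∈ ℝ^p for each i ∈ I₀ ∪ I₁. For every point x̄ ∈ ℝ^p the following are equivalent: (1) for every a ∈ ℝ^p and b ∈ ℝ such that ⟪a, x^(i)⟫ − b ≤ 0 for all i ∈ I₀ and ⟪a, x^(i)⟫ − b ≥ 0 for all i ∈ I₁, one has ⟪a, x̄⟫ − b ≥ 0; (2) there exists u : I₀ ∪ I₁ → ℝ with u_i ≥ 0 for all i, such that Σ_{i∈I₁} u_i − Σ_{i∈I₀} u_i = 1 and Σ_{i∈I₁} u_i • x^(i) − Σ_{i∈I₀} u_i • x^(i) = x̄. (This is the characterization of the 'Yes' region induced by factual queries.) -/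

import Mathlib

/-!
Lift each query point `x i` to `(x i, 1) ∈ V × ℝ` and negate it when its label is 'No'. A
classifier `(φ, b)` is consistent with the queries iff the functional `(y, t) ↦ φ y - b t` is
nonnegative on all signed lifts, and every functional on `V × ℝ` has this form; so `x̄` lies in
the 'Yes' region iff `(x̄, 1)` lies in the double dual of the cone spanned by the signed lifts.
By Farkas' lemma that double dual is the cone itself, and the multipliers `u` are exactly the
coefficients of `(x̄, 1)` as a conic combination.

Farkas' lemma comes from the separation theorem for closed cones. A finitely generated cone is
closed by the conic Carathéodory theorem: it is the finite union of the cones spanned by its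
linearly independent subfamilies, each the image of an orthant under a closed embedding.
-/

open Finset

section Caratheodory

variable {𝕜 E ι : Type*} [Field 𝕜] [LinearOrder 𝕜] [IsStrictOrderedRing 𝕜]
  [AddCommGroup E] [Module 𝕜 E]

variable (𝕜) in
def conicHull (g : ι → E) (s : Finset ι) : PointedCone 𝕜 E where
  carrier := {v | ∃ u : ι → 𝕜, (∀ i ∈ s, 0 ≤ u i) ∧ ∑ i ∈ s, u i • g i = v}
  zero_mem' := ⟨0, fun _ _ => le_rfl, by simp⟩
  add_mem' := by
    rintro _ _ ⟨u, hu, rfl⟩ ⟨w, hw, rfl⟩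
    exact ⟨u + w, fun i hi => add_nonneg (hu i hi) (hw i hi), by simp [add_smul, sum_add_distrib]⟩
  smul_mem' := by
    rintro c _ ⟨u, hu, rfl⟩
    refine ⟨(c : 𝕜) • u, fun i hi => mul_nonneg c.2 (hu i hi), ?_⟩
    simp only [smul_sum, Pi.smul_apply, smul_eq_mul, mul_smul]
    rfl

variable {g : ι → E} {s t : Finset ι} {v : E}

theorem mem_conicHull :
    v ∈ conicHull 𝕜 g s ↔ ∃ u : ι → 𝕜, (∀ i ∈ s, 0 ≤ u i) ∧ ∑ i ∈ s, u i • g i = v :=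
  Iff.rfl

theorem mem_conicHull_of_mem [DecidableEq ι] {i : ι} (hi : i ∈ s) : g i ∈ conicHull 𝕜 g s :=
  ⟨Pi.single i 1, fun j _ => by by_cases h : j = i <;> simp [h], by simp [Pi.single_apply, hi]⟩

theorem conicHull_mono (hst : s ⊆ t) : conicHull 𝕜 g s ≤ conicHull 𝕜 g t := by
  classical
  rintro _ ⟨u, hu, rfl⟩
  refine ⟨fun i => if i ∈ s then u i else 0, fun i _ => ?_, ?_⟩
  · dsimp only
    split_ifs with hi
    exacts [hu i hi, le_rfl]
  · rw [← sum_subset hst fun i _ hi => by simp [hi]]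
    exact sum_congr rfl fun i hi => by simp [hi]

/-- Subtracting the largest admissible multiple of a relation `∑ e i • g i = 0` with a positive
coefficient from a conic combination makes one coefficient vanish. -/
theorem exists_mem_conicHull_erase_of_sum_smul_eq_zero [DecidableEq ι] (hv : v ∈ conicHull 𝕜 g s)
    {e : ι → 𝕜} (he : ∑ i ∈ s, e i • g i = 0) (hpos : ∃ i ∈ s, 0 < e i) :
    ∃ j ∈ s, v ∈ conicHull 𝕜 g (s.erase j) := by
  obtain ⟨u, hu, rfl⟩ := hv
  obtain ⟨j, hj, hmin⟩ := {i ∈ s | 0 < e i}.exists_min_image (fun i => u i / e i)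
    (by simpa [Finset.Nonempty] using hpos)
  rw [mem_filter] at hj
  set c := u j / e j
  have hc : 0 ≤ c := div_nonneg (hu j hj.1) hj.2.le
  refine ⟨j, hj.1, u - c • e, fun i hi => ?_, ?_⟩
  · have hi := mem_of_mem_erase hi
    rcases lt_or_ge 0 (e i) with hei | hei
    · have := hmin i (mem_filter.2 ⟨hi, hei⟩)
      rw [le_div_iff₀ hei] at this
      simpa using this
    · simpa using add_nonneg (hu i hi) (mul_nonneg hc (neg_nonneg.2 hei))
  · have hj0 : (u - c • e) j = 0 := by
      simp [c, div_mul_cancel₀ _ hj.2.ne']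
    rw [sum_erase _ (by rw [hj0, zero_smul])]
    simp [sub_smul, sum_sub_distrib, mul_smul, ← smul_sum, he]

theorem exists_mem_conicHull_erase_of_not_linearIndepOn [DecidableEq ι]
    (hv : v ∈ conicHull 𝕜 g s) (hg : ¬LinearIndepOn 𝕜 g (s : Set ι)) :
    ∃ j ∈ s, v ∈ conicHull 𝕜 g (s.erase j) := by
  obtain ⟨e, he, i, hi, hei⟩ := not_linearIndepOn_finset_iff.1 hg
  rcases hei.lt_or_gt with hneg | hpos
  · exact exists_mem_conicHull_erase_of_sum_smul_eq_zero hv (e := -e)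
      (by simp [neg_smul, sum_neg_distrib, he]) ⟨i, hi, by simpa using hneg⟩
  · exact exists_mem_conicHull_erase_of_sum_smul_eq_zero hv he ⟨i, hi, hpos⟩

theorem exists_linearIndepOn_of_mem_conicHull (hv : v ∈ conicHull 𝕜 g s) :
    ∃ t ⊆ s, LinearIndepOn 𝕜 g (t : Set ι) ∧ v ∈ conicHull 𝕜 g t := by
  classical
  induction s using Finset.strongInduction with
  | _ s ih =>
  by_cases hg : LinearIndepOn 𝕜 g (s : Set ι)
  · exact ⟨s, subset_rfl, hg, hv⟩
  obtain ⟨j, hj, hvj⟩ := exists_mem_conicHull_erase_of_not_linearIndepOn hv hg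
  obtain ⟨t, hts, ht, hvt⟩ := ih _ (erase_ssubset hj) hvj
  exact ⟨t, hts.trans (erase_subset j s), ht, hvt⟩

end Caratheodory

section Farkas

variable {E ι : Type*} [NormedAddCommGroup E] [NormedSpace ℝ E] {g : ι → E} {s : Finset ι}
  {v : E}

theorem coe_conicHull_eq_image :
    (conicHull ℝ g s : Set E) =
      Fintype.linearCombination ℝ (fun i : s => g i) '' {c | 0 ≤ c} := by
  classical
  ext v
  simp only [SetLike.mem_coe, mem_conicHull, Set.mem_image, Set.mem_ofPred_eq,
    Fintype.linearCombination_apply]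
  constructor
  · rintro ⟨u, hu, rfl⟩
    exact ⟨fun i => u i, fun i => hu i i.2, sum_coe_sort s fun i => u i • g i⟩
  · rintro ⟨c, hc, rfl⟩
    refine ⟨fun i => if h : i ∈ s then c ⟨i, h⟩ else 0,
      fun i hi => by simpa [hi] using hc ⟨i, hi⟩, ?_⟩
    rw [← sum_coe_sort s]
    simp

theorem isClosed_conicHull_of_linearIndepOn (hg : LinearIndepOn ℝ g (s : Set ι)) :
    IsClosed (conicHull ℝ g s : Set E) := by
  rw [coe_conicHull_eq_image]
  refine (LinearMap.isClosedEmbedding_of_injective ?_).isClosedMap _ ?_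
  · exact LinearMap.ker_eq_bot.2 (linearIndependent_iff_injective_fintypeLinearCombination.1 hg)
  · exact isClosed_le continuous_const continuous_id

theorem isClosed_conicHull : IsClosed (conicHull ℝ g s : Set E) := by
  have : (conicHull ℝ g s : Set E) =
      ⋃ t ∈ {t : Finset ι | t ⊆ s ∧ LinearIndepOn ℝ g (t : Set ι)}, conicHull ℝ g t := by
    ext v
    simp only [SetLike.mem_coe, Set.mem_iUnion, Set.mem_ofPred_eq, exists_prop, and_assoc]
    exact ⟨exists_linearIndepOn_of_mem_conicHull, fun ⟨t, hts, _, hv⟩ => conicHull_mono hts hv⟩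
  rw [this]
  exact ((s.powerset.finite_toSet).subset fun t ht => mem_powerset.2 ht.1).isClosed_biUnion
    fun t ht => isClosed_conicHull_of_linearIndepOn ht.2

theorem mem_conicHull_iff_forall_nonneg :
    v ∈ conicHull ℝ g s ↔ ∀ f : E →ₗ[ℝ] ℝ, (∀ i ∈ s, 0 ≤ f (g i)) → 0 ≤ f v := by
  constructor
  · rintro ⟨u, hu, rfl⟩ f hf
    simpa using sum_nonneg fun i hi => mul_nonneg (hu i hi) (hf i hi)
  · classical
    intro h
    by_contra hv
    let C : ProperCone ℝ E := ⟨conicHull ℝ g s, isClosed_conicHull⟩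
    obtain ⟨f, hfC, hfv⟩ := C.hyperplane_separation_point hv
    exact hfv.not_ge (h f fun i hi => hfC _ (mem_conicHull_of_mem hi))

end Farkas

section SignedLift

variable {V ι : Type*} [AddCommGroup V] [DecidableEq ι] {I₀ I₁ : Finset ι} {x : ι → V}

/-- The query points lifted to `V × ℝ` and signed by their label: the classifier `(φ, b)` is
consistent with query `i` iff the functional `(y, t) ↦ φ y - b t` is nonnegative on it. -/
def signedLift (I₁ : Finset ι) (x : ι → V) (i : ι) : V × ℝ :=
  if i ∈ I₁ then (x i, 1) else -(x i, 1)

theorem signedLift_of_mem_right {i : ι} (hi : i ∈ I₁) : signedLift I₁ x i = (x i, 1) :=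
  if_pos hi

theorem signedLift_of_mem_left (hdisj : Disjoint I₀ I₁) {i : ι} (hi : i ∈ I₀) :
    signedLift I₁ x i = -(x i, 1) :=
  if_neg (disjoint_left.1 hdisj hi)

theorem sum_smul_signedLift [Module ℝ V] (hdisj : Disjoint I₀ I₁) (u : ι → ℝ) :
    ∑ i ∈ I₀ ∪ I₁, u i • signedLift I₁ x i =
      (∑ i ∈ I₁, u i • x i - ∑ i ∈ I₀, u i • x i, ∑ i ∈ I₁, u i - ∑ i ∈ I₀, u i) := by
  have h₀ : ∑ i ∈ I₀, u i • signedLift I₁ x i = -∑ i ∈ I₀, u i • (x i, (1 : ℝ)) := by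
    rw [← sum_neg_distrib]
    exact sum_congr rfl fun i hi => by rw [signedLift_of_mem_left hdisj hi, smul_neg]
  have h₁ : ∑ i ∈ I₁, u i • signedLift I₁ x i = ∑ i ∈ I₁, u i • (x i, (1 : ℝ)) :=
    sum_congr rfl fun i hi => by rw [signedLift_of_mem_right hi]
  rw [sum_union hdisj, h₀, h₁]
  ext <;> simp [Prod.fst_sum, Prod.snd_sum, sub_eq_neg_add]

end SignedLift

theorem forall_consistent_classifier_iff_exists_multipliers {V ι : Type*}
    [NormedAddCommGroup V] [NormedSpace ℝ V] [DecidableEq ι] {I₀ I₁ : Finset ι}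
    (hdisj : Disjoint I₀ I₁) (x : ι → V) (xbar : V) :
    (∀ (φ : V →ₗ[ℝ] ℝ) (b : ℝ), (∀ i ∈ I₀, φ (x i) - b ≤ 0) → (∀ i ∈ I₁, φ (x i) - b ≥ 0) →
        φ xbar - b ≥ 0) ↔
      ∃ u : ι → ℝ, (∀ i ∈ I₀ ∪ I₁, 0 ≤ u i) ∧ (∑ i ∈ I₁, u i) - (∑ i ∈ I₀, u i) = 1 ∧
        (∑ i ∈ I₁, u i • x i) - (∑ i ∈ I₀, u i • x i) = xbar := by
  have hmem : (xbar, 1) ∈ conicHull ℝ (signedLift I₁ x) (I₀ ∪ I₁) ↔ ∃ u : ι → ℝ,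
      (∀ i ∈ I₀ ∪ I₁, 0 ≤ u i) ∧ (∑ i ∈ I₁, u i) - (∑ i ∈ I₀, u i) = 1 ∧
        (∑ i ∈ I₁, u i • x i) - (∑ i ∈ I₀, u i • x i) = xbar := by
    simp only [mem_conicHull, sum_smul_signedLift hdisj, Prod.ext_iff, and_comm]
  rw [← hmem, mem_conicHull_iff_forall_nonneg]
  constructor
  · intro h f hf
    have hf_lift (y : V) : f (y, 1) = f (y, 0) + f (0, 1) := by
      rw [← map_add, Prod.mk_add_mk, add_zero, zero_add]
    have := h (f ∘ₗ LinearMap.inl ℝ V ℝ) (-f (0, 1)) (fun i hi => ?_) (fun i hi => ?_)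
    · simpa [hf_lift xbar] using this
    all_goals rw [LinearMap.comp_apply, LinearMap.inl_apply]
    · have := hf i (mem_union_left _ hi)
      rw [signedLift_of_mem_left hdisj hi, map_neg, hf_lift] at this
      linarith
    · have := hf i (mem_union_right _ hi)
      rw [signedLift_of_mem_right hi, hf_lift] at this
      linarith
  · intro h φ b h₀ h₁
    have := h (φ.coprod (-b • LinearMap.id)) fun i hi => ?_
    · simpa [sub_eq_add_neg] using this
    rcases mem_union.1 hi with hi | hi
    · simpa [signedLift_of_mem_left hdisj hi, sub_eq_add_neg] using h₀ i hi
    · simpa [signedLift_of_mem_right hi, sub_eq_add_neg] using h₁ i hi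

theorem yes_region_characterization {p : ℕ} {ι : Type*} [DecidableEq ι]
    (I₀ I₁ : Finset ι) (hdisj : Disjoint I₀ I₁)
    (x : ι → (Fin p → ℝ)) (xbar : Fin p → ℝ) :
    ((∀ (a : Fin p → ℝ) (b : ℝ),
        (∀ i ∈ I₀, (∑ k, a k * x i k) - b ≤ 0) →
        (∀ i ∈ I₁, (∑ k, a k * x i k) - b ≥ 0) →
        (∑ k, a k * xbar k) - b ≥ 0)
      ↔ (∃ u : ι → ℝ, (∀ i ∈ I₀ ∪ I₁, 0 ≤ u i) ∧
          (∑ i ∈ I₁, u i) - (∑ i ∈ I₀, u i) = 1 ∧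
          (∑ i ∈ I₁, u i • x i) - (∑ i ∈ I₀, u i • x i) = xbar)) := by
  rw [← forall_consistent_classifier_iff_exists_multipliers hdisj]
  symm
  exact (dotProductEquiv ℝ (Fin p)).surjective.forall
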